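/- arXiv:1204.6233 — 2 statements merged into one kernel-verified Lean document; each statement's English description precedes it below -/
import Mathlib

section
/- Let t ≥ 0 and k ≥ 1 be integers and F a CNF formula. Let O_s be a set of pairwise vertex-disjoint subgraphs of inc(F), each a subdivision of the (2t+2)-wall, and let Z ⊆ var(F) be disjoint from ⋃_{W∈O_s} V(W). For each W ∈ O_s let (B(W), P_W, R_W) be a valid obstruction-template of W with respect to Z and inc(F), where the sets Q_W of new vertices are pairwise disjoint; let B_m denote the union of the graphs B(W), a bipartite graph on Z ⊎ Q_m with Q_m = ⋃_{W∈O_s} Q_W. Let B be a strong W_{≤t}-backdoor set of F with |B| ≤ k such that B ∩ V(W) = ∅ for every W ∈ O_s and such that every variable b ∈ B for which some W ∈ O_s contains a clause c with b ∈ lit(c) and a clause c' with ¬b ∈ lit(c') belongs to Z. If L ⊆ Z is the neighborhood in B_m of at least t·2^k + 1 vertices of Q_m, then B ∩ L ≠ ∅. -/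
/-- `twLE G t` means the treewidth of `G` is at most `t`. -/
def twLE {α : Type} (G : SimpleGraph α) (t : ℕ) : Prop :=
  ∃ (ι : Type) (T : SimpleGraph ι) (bag : ι → Finset α),
    T.IsTree ∧
    (∀ u v : α, G.Adj u v → ∃ i, u ∈ bag i ∧ v ∈ bag i) ∧
    (∀ v : α, (T.induce {i | v ∈ bag i}).Connected) ∧
    (∀ i, (bag i).card ≤ t + 1)

def wallRel (r : ℕ) (p q : ℕ × ℕ) : Prop :=
  1 ≤ p.1 ∧ p.1 ≤ r ∧ 1 ≤ p.2 ∧ p.2 ≤ r ∧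
  1 ≤ q.1 ∧ q.1 ≤ r ∧ 1 ≤ q.2 ∧ q.2 ≤ r ∧
  ((p.2 = q.2 ∧ q.1 = p.1 + 1) ∨ (p.1 = q.1 ∧ q.2 = p.2 + 1 ∧ Even (p.1 + p.2)))

def wallGraph (r : ℕ) : SimpleGraph (ℕ × ℕ) := SimpleGraph.fromRel (wallRel r)

def wallVerts (r : ℕ) : Set (ℕ × ℕ) := {p | 1 ≤ p.1 ∧ p.1 ≤ r ∧ 1 ≤ p.2 ∧ p.2 ≤ r}

/-- The `r`-wall. -/
def Wall (r : ℕ) : SimpleGraph (wallVerts r) := (wallGraph r).induce (wallVerts r)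

/-- `W` is (exactly) a subdivision of `H`. -/
def IsSubdivisionOf {γ β : Type} (W : SimpleGraph γ) (H : SimpleGraph β) : Prop :=
  ∃ (b : β → γ) (p : ∀ u v : β, H.Adj u v → W.Walk (b u) (b v)),
    Function.Injective b ∧
    (∀ (u v : β) (h : H.Adj u v), (p u v h).IsPath) ∧
    (∀ (u v : β) (h : H.Adj u v), p v u h.symm = (p u v h).reverse) ∧
    (∀ (u v : β) (h : H.Adj u v) (x : β), b x ∈ (p u v h).support → x = u ∨ x = v) ∧
    (∀ (u v : β) (h : H.Adj u v) (u' v' : β) (h' : H.Adj u' v'), s(u, v) ≠ s(u', v') →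
      ∀ w : γ, w ∈ (p u v h).support → w ∈ (p u' v' h').support → w = b u ∨ w = b v) ∧
    (∀ w : γ, ∃ (u v : β) (h : H.Adj u v), w ∈ (p u v h).support) ∧
    (∀ e ∈ W.edgeSet, ∃ (u v : β) (h : H.Adj u v), e ∈ (p u v h).edges)

/-- `G` contains `H` as a topological minor. -/
def containsSubdivision {α β : Type} (G : SimpleGraph α) (H : SimpleGraph β) : Prop :=
  ∃ W : G.Subgraph, IsSubdivisionOf W.coe H

noncomputable def nb (t : ℕ) : ℕ := ⌈(16 : ℝ) * ((t : ℝ) + 2) * Real.logb 2 ((t : ℝ) + 2)⌉₊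
noncomputable def sameF (k t : ℕ) : ℕ := 3 * (nb t) ^ 2 * t * 2 ^ (2 * k)
noncomputable def obsF (k t : ℕ) : ℕ := 2 ^ k * sameF k t + k
noncomputable def wallF (k t : ℕ) : ℕ := (2 * t + 2) * (1 + ⌈Real.sqrt (obsF k t)⌉₊)

structure CNF (V : Type) where
  ι : Type
  cls : Finset ι
  lit : ι → Finset (V × Bool)
  ok : ∀ i ∈ cls, ∀ v : V, ¬((v, true) ∈ lit i ∧ (v, false) ∈ lit i)

def CNF.vars {V : Type} [DecidableEq V] (F : CNF V) : Finset V :=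
  F.cls.biUnion (fun i => (F.lit i).image Prod.fst)

def CNF.reduce {V : Type} [DecidableEq V] (F : CNF V) (X : Finset V) (τ : V → Bool) : CNF V where
  ι := F.ι
  cls := F.cls.filter (fun i => ∀ l ∈ F.lit i, l.1 ∈ X → τ l.1 ≠ l.2)
  lit := fun i => (F.lit i).filter (fun l => l.1 ∉ X)
  ok := by
    intro i hi v hv
    exact F.ok i (Finset.mem_of_mem_filter i hi) v
      ⟨(Finset.mem_filter.mp hv.1).1, (Finset.mem_filter.mp hv.2).1⟩

def CNF.inc {V : Type} (F : CNF V) : SimpleGraph (V ⊕ F.ι) :=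
  SimpleGraph.fromRel (fun a b =>
    match a, b with
    | Sum.inl x, Sum.inr i => i ∈ F.cls ∧ ((x, true) ∈ F.lit i ∨ (x, false) ∈ F.lit i)
    | _, _ => False)

/-- The vertices of `inc F` surviving the application of the partial assignment `τ` on `X`. -/
def CNF.surv {V : Type} (F : CNF V) (X : Finset V) (τ : V → Bool) : Set (V ⊕ F.ι) :=
  {a | match a with
       | Sum.inl x => x ∉ X
       | Sum.inr i => ∀ l ∈ F.lit i, l.1 ∈ X → τ l.1 ≠ l.2}

def CNF.strongBackdoor {V : Type} [DecidableEq V] (F : CNF V) (t : ℕ) (B : Finset V) : Prop :=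
  B ⊆ F.vars ∧ ∀ τ : V → Bool, twLE (F.reduce B τ).inc t

def CNF.delete {V : Type} [DecidableEq V] (F : CNF V) (B : Finset V) : CNF V where
  ι := F.ι
  cls := F.cls
  lit := fun i => (F.lit i).filter (fun l => l.1 ∉ B)
  ok := by
    intro i hi v hv
    exact F.ok i hi v ⟨(Finset.mem_filter.mp hv.1).1, (Finset.mem_filter.mp hv.2).1⟩

noncomputable def CNF.count {V : Type} [DecidableEq V] (F : CNF V) : ℕ :=
  Nat.card {σ : {x // x ∈ F.vars} → Bool //
    ∀ i ∈ F.cls, ∃ l ∈ F.lit i, ∃ h : l.1 ∈ F.vars, σ ⟨l.1, h⟩ = l.2}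

def ValidOT {α κ : Type} (G : SimpleGraph α) (W : G.Subgraph) (Z : Finset α) (t : ℕ)
    (Q : Finset κ) (N : κ → Finset α) (P : Set (Set α)) (R : κ → Set α) : Prop :=
  (∀ A ∈ P, A ⊆ W.verts ∧ (W.induce A).Connected) ∧
  (∀ A ∈ P, ∀ A' ∈ P, A ≠ A' → Disjoint A A') ∧
  (⋃ A ∈ P, A) = W.verts ∧
  (∀ q ∈ Q, R q ∈ P) ∧
  (∀ q ∈ Q, (N q : Set α) ⊆ (Z : Set α)) ∧
  (∀ q ∈ Q, ∀ z ∈ N q, z ∉ R q ∧ ∃ w ∈ R q, G.Adj z w) ∧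
  (∀ q ∈ Q, ∃ z ∈ N q, ∀ q' ∈ Q, q' ≠ q → R q' = R q → z ∉ N q') ∧
  (∀ z ∈ Z, ∃ q ∈ Q, z ∈ N q) ∧
  (∀ q ∈ Q, nb t ≤ (N q).card ∧ (N q).card ≤ 3 * nb t) ∧
  (∀ q ∈ Q, ∀ v ∈ R q, ∀ v' ∈ R q,
    (∃ z ∈ Z, G.Adj v z ∧ z ∉ N q) → (∃ z ∈ Z, G.Adj v' z ∧ z ∉ N q) → v = v')

def HasMinor {α β : Type} (G : SimpleGraph α) (H : SimpleGraph β) : Prop :=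
  ∃ C : β → Set α,
    (∀ u, (C u).Nonempty) ∧
    (∀ u, (G.induce (C u)).Connected) ∧
    (∀ u v, u ≠ v → Disjoint (C u) (C v)) ∧
    (∀ u v, H.Adj u v → ∃ a ∈ C u, ∃ b ∈ C v, G.Adj a b)

/-! Suppose `B` misses `L`. For a region `R(q)`, let `τ_q` set each variable so as to falsify its
literals in the clauses of `R(q)`. On `B` this is consistent: a variable of `B` occurring with
both signs in the wall of `q` lies in `Z \ L`, while by condition (5) only one vertex of `R(q)` has
neighbours in `Z \ N(q)`, and no clause contains both signs. Hence `R(q)` survives in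
`inc(F[τ_q])`. Among the more than `t·2^k` vertices `q` with `N(q) = L`, pigeonhole gives more
than `t` whose `τ_q` agree on `B`. In `inc(F[τ])` their regions are disjoint (by the private
neighbours within a wall) and connected, and each of the `|L| ≥ nb(t) ≥ t + 2` vertices of `L`
is adjacent to each of them. By the Helly property of subtrees, a tree decomposition of this
graph has a bag containing either a vertex of `L` together with one vertex of every region, or
all of `L`; either way the width exceeds `t`. -/

namespace SimpleGraph

variable {V : Type*} {G : SimpleGraph V}

def PreconnectedOn (G : SimpleGraph V) (C : Set V) : Prop :=
  ∀ a ∈ C, ∀ b ∈ C, ∃ w : G.Walk a b, ∀ x ∈ w.support, x ∈ C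

lemma Preconnected.preconnectedOn_of_induce {C : Set V} (h : (G.induce C).Preconnected) :
    G.PreconnectedOn C := by
  intro a ha b hb
  obtain ⟨p⟩ := h ⟨a, ha⟩ ⟨b, hb⟩
  refine ⟨p.map (Embedding.induce C).toHom, fun x hx => ?_⟩
  have hx' : x ∈ (p.map (Embedding.induce C).toHom).support := hx
  rw [Walk.support_map, List.mem_map] at hx'
  obtain ⟨y, -, rfl⟩ := hx'
  exact y.2

lemma Subgraph.Connected.preconnectedOn_of_adj {G' : SimpleGraph V} {H : G.Subgraph}
    (hH : H.Connected) (hadj : ∀ u ∈ H.verts, ∀ v ∈ H.verts, H.Adj u v → G'.Adj u v) :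
    G'.PreconnectedOn H.verts :=
  Preconnected.preconnectedOn_of_induce <|
    hH.coe.preconnected.map
      (⟨id, fun {u v} huv => hadj u u.2 v v.2 huv⟩ : H.coe →g G'.induce H.verts)
      Function.surjective_id

lemma IsAcyclic.support_subset_of_isPath (hG : G.IsAcyclic) {a b : V} {p : G.Walk a b}
    (hp : p.IsPath) (q : G.Walk a b) : p.support ⊆ q.support := by
  classical
  obtain rfl : p = q.bypass := congrArg Subtype.val <|
    (hG.subsingleton_path a b).elim ⟨p, hp⟩ ⟨q.bypass, q.bypass_isPath⟩
  exact q.support_bypass_subset_support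

lemma IsAcyclic.edges_subset_of_isPath (hG : G.IsAcyclic) {a b : V} {p : G.Walk a b}
    (hp : p.IsPath) (q : G.Walk a b) : p.edges ⊆ q.edges := by
  classical
  obtain rfl : p = q.bypass := congrArg Subtype.val <|
    (hG.subsingleton_path a b).elim ⟨p, hp⟩ ⟨q.bypass, q.bypass_isPath⟩
  exact q.edges_bypass_subset_edges

lemma PreconnectedOn.inter (hG : G.IsAcyclic) {C D : Set V} (hC : G.PreconnectedOn C)
    (hD : G.PreconnectedOn D) : G.PreconnectedOn (C ∩ D) := by
  classical
  rintro a ⟨haC, haD⟩ b ⟨hbC, hbD⟩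
  obtain ⟨wC, hwC⟩ := hC a haC b hbC
  obtain ⟨wD, hwD⟩ := hD a haD b hbD
  exact ⟨wC.bypass, fun x hx => ⟨hwC x (wC.support_bypass_subset_support hx),
    hwD x (hG.support_subset_of_isPath wC.bypass_isPath wD hx)⟩⟩

lemma IsAcyclic.mem_or_mem_of_adj (hG : G.IsAcyclic) {C D : Set V} (hC : G.PreconnectedOn C)
    (hD : G.PreconnectedOn D) {a x y : V} (haC : a ∈ C) (haD : a ∈ D) (hx : x ∈ C) (hy : y ∈ D)
    (hxy : G.Adj x y) : y ∈ C ∨ x ∈ D := by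
  obtain ⟨w₁, hw₁⟩ := hC x hx a haC
  obtain ⟨w₂, hw₂⟩ := hD a haD y hy
  have he := isBridge_iff_forall_walk_mem_edges.mp
    (isAcyclic_iff_forall_adj_isBridge.mp hG hxy) (w₁.append w₂)
  rw [Walk.edges_append, List.mem_append] at he
  exact he.imp (fun h => hw₁ y (w₁.snd_mem_support_of_mem_edges h))
    (fun h => hw₂ x (w₂.fst_mem_support_of_mem_edges h))

lemma IsAcyclic.inter_inter_nonempty (hG : G.IsAcyclic) {C₁ C₂ C₃ : Set V}
    (h₁ : G.PreconnectedOn C₁) (h₂ : G.PreconnectedOn C₂) (h₃ : G.PreconnectedOn C₃)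
    (h₁₂ : (C₁ ∩ C₂).Nonempty) (h₁₃ : (C₁ ∩ C₃).Nonempty) (h₂₃ : (C₂ ∩ C₃).Nonempty) :
    (C₁ ∩ C₂ ∩ C₃).Nonempty := by
  classical
  obtain ⟨a, ha₁, ha₂⟩ := h₁₂
  obtain ⟨b, hb₁, hb₃⟩ := h₁₃
  obtain ⟨c, hc₂, hc₃⟩ := h₂₃
  by_contra hempty
  obtain ⟨w, hw⟩ := h₃ b hb₃ c hc₃
  obtain ⟨w₁, hw₁⟩ := h₁ b hb₁ a ha₁
  obtain ⟨w₂, hw₂⟩ := h₂ a ha₂ c hc₂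
  -- the path from `b` to `c` runs inside `C₃` and, as `G` is acyclic, inside `C₁ ∪ C₂`
  have hcover : ∀ x ∈ w.bypass.support, x ∈ C₃ ∧ (x ∈ C₁ ∨ x ∈ C₂) := fun x hx => by
    refine ⟨hw x (w.support_bypass_subset_support hx), ?_⟩
    have := hG.support_subset_of_isPath w.bypass_isPath (w₁.append w₂) hx
    exact (Walk.mem_support_append_iff _ _).mp this |>.imp (hw₁ x) (hw₂ x)
  obtain ⟨d, hd, hd₁, hd₁'⟩ :=
    w.bypass.exists_boundary_dart C₁ hb₁ fun h => hempty ⟨c, ⟨h, hc₂⟩, hc₃⟩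
  obtain ⟨hfst₃, -⟩ := hcover _ (w.bypass.dart_fst_mem_support_of_mem_darts hd)
  have hsnd₂ := ((hcover _ (w.bypass.dart_snd_mem_support_of_mem_darts hd)).2).resolve_left hd₁'
  rcases hG.mem_or_mem_of_adj h₁ h₂ ha₁ ha₂ hd₁ hsnd₂ d.adj with h | h
  exacts [hd₁' h, hempty ⟨d.fst, ⟨hd₁, h⟩, hfst₃⟩]

theorem IsAcyclic.exists_forall_mem_of_pairwise_inter_nonempty (hG : G.IsAcyclic) {ι : Type*}
    {s : Finset ι} (hs : s.Nonempty) {C : ι → Set V} (hC : ∀ i ∈ s, G.PreconnectedOn (C i))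
    (hCC : ∀ i ∈ s, ∀ j ∈ s, (C i ∩ C j).Nonempty) : ∃ m, ∀ i ∈ s, m ∈ C i := by
  induction hs using Finset.Nonempty.cons_induction generalizing C with
  | singleton i =>
    obtain ⟨m, hm, -⟩ := hCC i (Finset.mem_singleton_self i) i (Finset.mem_singleton_self i)
    exact ⟨m, by simpa using hm⟩
  | cons i s his hs ih =>
    have hi : i ∈ Finset.cons i s his := Finset.mem_cons_self i s
    have hsub : ∀ {j}, j ∈ s → j ∈ Finset.cons i s his := Finset.mem_cons_of_mem
    obtain ⟨m, hm⟩ := ih (C := fun j => C i ∩ C j)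
      (fun j hj => (hC i hi).inter hG (hC j (hsub hj)))
      (fun j hj j' hj' => (hG.inter_inter_nonempty (hC i hi) (hC j (hsub hj)) (hC j' (hsub hj'))
          (hCC i hi j (hsub hj)) (hCC i hi j' (hsub hj')) (hCC j (hsub hj) j' (hsub hj'))).mono
        fun x hx => ⟨hx.1, hx.1.1, hx.2⟩)
    obtain ⟨j, hj⟩ := hs
    refine ⟨m, fun k hk => ?_⟩
    rcases Finset.mem_cons.mp hk with rfl | hk
    exacts [(hm j hj).1, (hm k hk).2]

variable {α ι : Type*}

structure IsTreeDecomposition (G : SimpleGraph α) (T : SimpleGraph ι) (bag : ι → Finset α) :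
    Prop where
  isTree : T.IsTree
  exists_bag_of_adj : ∀ u v, G.Adj u v → ∃ i, u ∈ bag i ∧ v ∈ bag i
  exists_bag : ∀ v, ∃ i, v ∈ bag i
  preconnectedOn : ∀ v, T.PreconnectedOn {i | v ∈ bag i}

def bagsMeeting (bag : ι → Finset α) (R : Set α) : Set ι := {i | ∃ v ∈ R, v ∈ bag i}

namespace IsTreeDecomposition

variable {G : SimpleGraph α} {T : SimpleGraph ι} {bag : ι → Finset α}
  (hD : G.IsTreeDecomposition T bag)
include hD

lemma preconnectedOn_bagsMeeting {R : Set α} (hR : G.PreconnectedOn R) :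
    T.PreconnectedOn (bagsMeeting bag R) := by
  suffices key : ∀ {v v'} (w : G.Walk v v'), (∀ x ∈ w.support, x ∈ R) →
      ∀ a, v ∈ bag a → ∀ b, v' ∈ bag b → ∃ p : T.Walk a b, ∀ i ∈ p.support, i ∈ bagsMeeting bag R by
    rintro a ⟨v, hv, hva⟩ b ⟨v', hv', hv'b⟩
    obtain ⟨w, hw⟩ := hR v hv v' hv'
    exact key w hw a hva b hv'b
  intro v v' w
  induction w with
  | nil =>
    intro hw a ha b hb
    obtain ⟨p, hp⟩ := hD.preconnectedOn _ a ha b hb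
    exact ⟨p, fun i hi => ⟨_, hw _ (Walk.start_mem_support _), hp i hi⟩⟩
  | @cons u m v' huv w ih =>
    intro hw a ha b hb
    obtain ⟨c, huc, hmc⟩ := hD.exists_bag_of_adj u m huv
    obtain ⟨p₁, hp₁⟩ := hD.preconnectedOn u a ha c huc
    obtain ⟨p₂, hp₂⟩ := ih (fun x hx => hw x (Walk.support_cons _ _ ▸ List.mem_cons_of_mem _ hx))
      c hmc b hb
    refine ⟨p₁.append p₂, fun i hi => ?_⟩
    rcases (Walk.mem_support_append_iff _ _).mp hi with hi | hi
    exacts [⟨u, hw u (Walk.start_mem_support _), hp₁ i hi⟩, hp₂ i hi]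

lemma bagsMeeting_nonempty {R : Set α} (hR : R.Nonempty) : (bagsMeeting bag R).Nonempty := by
  obtain ⟨v, hv⟩ := hR
  obtain ⟨i, hi⟩ := hD.exists_bag v
  exact ⟨i, v, hv, hi⟩

lemma exists_bag_mem_bagsMeeting {R : Set α} {z w : α} (hw : w ∈ R) (hzw : G.Adj z w) :
    ∃ i, z ∈ bag i ∧ i ∈ bagsMeeting bag R := by
  obtain ⟨i, hz, hw'⟩ := hD.exists_bag_of_adj z w hzw
  exact ⟨i, hz, w, hw, hw'⟩

lemma exists_bag_meeting_all {κ : Type*} {Qs : Finset κ} (hQs : Qs.Nonempty) {R : κ → Set α}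
    (hR : ∀ q ∈ Qs, G.PreconnectedOn (R q))
    (hpair : ∀ q ∈ Qs, ∀ q' ∈ Qs, (bagsMeeting bag (R q) ∩ bagsMeeting bag (R q')).Nonempty)
    {z : α} (hz : ∀ q ∈ Qs, ∃ w ∈ R q, G.Adj z w) :
    ∃ i, z ∈ bag i ∧ ∀ q ∈ Qs, ∃ v ∈ R q, v ∈ bag i := by
  have hA := hD.isTree.isAcyclic
  have hmeet : ∀ q ∈ Qs, ({i | z ∈ bag i} ∩ bagsMeeting bag (R q)).Nonempty := fun q hq => by
    obtain ⟨w, hw, hzw⟩ := hz q hq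
    exact hD.exists_bag_mem_bagsMeeting hw hzw
  obtain ⟨i, hi⟩ := hA.exists_forall_mem_of_pairwise_inter_nonempty hQs
    (C := fun q => {i | z ∈ bag i} ∩ bagsMeeting bag (R q))
    (fun q hq => (hD.preconnectedOn z).inter hA (hD.preconnectedOn_bagsMeeting (hR q hq)))
    (fun q hq q' hq' => (hA.inter_inter_nonempty (hD.preconnectedOn z)
        (hD.preconnectedOn_bagsMeeting (hR q hq)) (hD.preconnectedOn_bagsMeeting (hR q' hq'))
        (hmeet q hq) (hmeet q' hq') (hpair q hq q' hq')).mono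
      fun x hx => ⟨hx.1, hx.1.1, hx.2⟩)
  obtain ⟨q, hq⟩ := hQs
  exact ⟨i, (hi q hq).1, fun q hq => (hi q hq).2⟩

end IsTreeDecomposition

lemma IsTree.exists_mem_of_inter_nonempty {T : SimpleGraph ι} (hT : T.IsTree) {C C' : Set ι}
    (hC : T.PreconnectedOn C) (hC' : T.PreconnectedOn C') (hCne : C.Nonempty) (hC'ne : C'.Nonempty)
    (hdisj : Disjoint C C') :
    ∃ x, ∀ D, T.PreconnectedOn D → (D ∩ C).Nonempty → (D ∩ C').Nonempty → x ∈ D := by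
  classical
  obtain ⟨a, ha⟩ := hCne
  obtain ⟨b, hb⟩ := hC'ne
  obtain ⟨w⟩ := hT.connected a b
  obtain ⟨d, hd, hdC, hdC'⟩ := w.bypass.exists_boundary_dart C ha (hdisj.notMem_of_mem_right hb)
  refine ⟨d.fst, fun D hD ⟨c, hcD, hcC⟩ ⟨c', hc'D, hc'C'⟩ => ?_⟩
  obtain ⟨w₁, hw₁⟩ := hC a ha c hcC
  obtain ⟨w₂, hw₂⟩ := hD c hcD c' hc'D
  obtain ⟨w₃, hw₃⟩ := hC' c' hc'C' b hb
  have he : s(d.fst, d.snd) ∈ (w₁.append (w₂.append w₃)).edges :=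
    hT.isAcyclic.edges_subset_of_isPath w.bypass_isPath _ (List.mem_map_of_mem hd)
  simp only [Walk.edges_append, List.mem_append] at he
  rcases he with he | he | he
  · exact absurd (hw₁ _ (w₁.snd_mem_support_of_mem_edges he)) hdC'
  · exact hw₂ _ (w₂.fst_mem_support_of_mem_edges he)
  · exact absurd (hw₃ _ (w₃.fst_mem_support_of_mem_edges he)) (hdisj.notMem_of_mem_left hdC)

end SimpleGraph

lemma Finset.card_add_one_le_of_forall_exists_mem {α κ : Type*} {S : Finset α} {Qs : Finset κ}
    {R : κ → Set α} (hdisj : (Qs : Set κ).PairwiseDisjoint R) {z : α} (hz : z ∈ S)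
    (hzR : ∀ q ∈ Qs, z ∉ R q) (hS : ∀ q ∈ Qs, ∃ v ∈ R q, v ∈ S) : Qs.card + 1 ≤ S.card := by
  classical
  choose f hfR hfS using hS
  have hcard : Qs.attach.card ≤ (S.erase z).card := by
    refine Finset.card_le_card_of_injOn (fun q => f q.1 q.2) (fun q _ => ?_) fun q _ q' _ h => ?_
    · exact Finset.mem_erase.mpr ⟨fun h => hzR q.1 q.2 (h ▸ hfR q.1 q.2), hfS q.1 q.2⟩
    · have h : f q.1 q.2 = f q'.1 q'.2 := h
      exact Subtype.ext <| hdisj.elim q.2 q'.2 <|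
        Set.not_disjoint_iff.mpr ⟨_, hfR q.1 q.2, h ▸ hfR q'.1 q'.2⟩
  rw [Finset.card_attach] at hcard
  have := Finset.card_erase_add_one hz
  omega

namespace SimpleGraph.IsTreeDecomposition

variable {α ι : Type*} {G : SimpleGraph α} {T : SimpleGraph ι} {bag : ι → Finset α}

/-- The sets `R q` and the singletons of `L` are the branch sets of a `K_{|Qs|,|L|}` minor. -/
theorem exists_bag_card_ge (hD : G.IsTreeDecomposition T bag) {κ : Type*} {Qs : Finset κ}
    (hQs : Qs.Nonempty) {R : κ → Set α} (hR : ∀ q ∈ Qs, G.PreconnectedOn (R q))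
    (hRne : ∀ q ∈ Qs, (R q).Nonempty) (hdisj : (Qs : Set κ).PairwiseDisjoint R) {L : Finset α}
    (hL : L.Nonempty) (hLR : ∀ z ∈ L, ∀ q ∈ Qs, z ∉ R q ∧ ∃ w ∈ R q, G.Adj z w) :
    ∃ i, Qs.card + 1 ≤ (bag i).card ∨ L.card ≤ (bag i).card := by
  by_cases hpair : ∀ q ∈ Qs, ∀ q' ∈ Qs,
      (bagsMeeting bag (R q) ∩ bagsMeeting bag (R q')).Nonempty
  · obtain ⟨z, hz⟩ := hL
    obtain ⟨i, hzi, hi⟩ :=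
      hD.exists_bag_meeting_all hQs hR hpair fun q hq => (hLR z hz q hq).2
    exact ⟨i, .inl <| Finset.card_add_one_le_of_forall_exists_mem hdisj hzi
      (fun q hq => (hLR z hz q hq).1) hi⟩
  · push Not at hpair
    obtain ⟨q, hq, q', hq', hsep⟩ := hpair
    obtain ⟨i, hi⟩ := hD.isTree.exists_mem_of_inter_nonempty
      (hD.preconnectedOn_bagsMeeting (hR q hq)) (hD.preconnectedOn_bagsMeeting (hR q' hq'))
      (hD.bagsMeeting_nonempty (hRne q hq)) (hD.bagsMeeting_nonempty (hRne q' hq'))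
      (Set.disjoint_iff_inter_eq_empty.mpr hsep)
    refine ⟨i, .inr <| Finset.card_le_card fun z hz => hi _ (hD.preconnectedOn z) ?_ ?_⟩
    · obtain ⟨w, hw, hzw⟩ := (hLR z hz q hq).2
      exact hD.exists_bag_mem_bagsMeeting hw hzw
    · obtain ⟨w, hw, hzw⟩ := (hLR z hz q' hq').2
      exact hD.exists_bag_mem_bagsMeeting hw hzw

end SimpleGraph.IsTreeDecomposition

lemma twLE.exists_isTreeDecomposition {α : Type} {G : SimpleGraph α} {t : ℕ} (h : twLE G t) :
    ∃ (ι : Type) (T : SimpleGraph ι) (bag : ι → Finset α),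
      G.IsTreeDecomposition T bag ∧ ∀ i, (bag i).card ≤ t + 1 := by
  obtain ⟨ι, T, bag, hT, hadj, hconn, hcard⟩ := h
  refine ⟨ι, T, bag, ⟨hT, hadj, fun v => ?_, fun v => ?_⟩, hcard⟩
  · obtain ⟨⟨i, hi⟩⟩ := (hconn v).nonempty
    exact ⟨i, hi⟩
  · exact (hconn v).preconnected.preconnectedOn_of_induce

theorem not_twLE_of_forall_adj {α κ : Type} {G : SimpleGraph α} {t : ℕ} {Qs : Finset κ}
    (hQs : t + 1 ≤ Qs.card) {R : κ → Set α} (hR : ∀ q ∈ Qs, G.PreconnectedOn (R q))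
    (hRne : ∀ q ∈ Qs, (R q).Nonempty) (hdisj : (Qs : Set κ).PairwiseDisjoint R) {L : Finset α}
    (hL : t + 2 ≤ L.card) (hLR : ∀ z ∈ L, ∀ q ∈ Qs, z ∉ R q ∧ ∃ w ∈ R q, G.Adj z w) :
    ¬ twLE G t := fun htw => by
  obtain ⟨ι, T, bag, hD, hcard⟩ := htw.exists_isTreeDecomposition
  obtain ⟨i, hi⟩ := hD.exists_bag_card_ge (Finset.card_pos.mp (by omega)) hR hRne hdisj
    (Finset.card_pos.mp (by omega)) hLR
  have := hcard i
  omega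

lemma add_two_le_nb (t : ℕ) : t + 2 ≤ nb t := by
  have ht : (2 : ℝ) ≤ t + 2 := by linarith [(t.cast_nonneg : (0 : ℝ) ≤ t)]
  have hlog : 1 ≤ Real.logb 2 ((t : ℝ) + 2) := by
    rw [Real.le_logb_iff_rpow_le one_lt_two (by linarith)]
    simp [ht]
  have : ((t + 2 : ℕ) : ℝ) ≤ 16 * ((t : ℝ) + 2) * Real.logb 2 ((t : ℝ) + 2) := by
    push_cast
    nlinarith
  exact Nat.cast_le.mp (this.trans (Nat.le_ceil _))

lemma exists_lt_card_filter_forall_eq {κ V : Type*} (X : Finset V) (s : Finset κ) (f : κ → V → Bool)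
    {n : ℕ} (h : 2 ^ X.card * n < s.card) :
    ∃ τ : V → Bool, n < (s.filter fun q => ∀ x ∈ X, τ x = f q x).card := by
  classical
  obtain ⟨g, -, hg⟩ := Finset.exists_lt_card_fiber_of_mul_lt_card_of_maps_to
    (f := fun q (x : X) => f q x) (t := Finset.univ) (fun _ _ => Finset.mem_univ _)
    (by simpa [Finset.card_univ, Fintype.card_fun] using h)
  obtain ⟨q₀, hq₀⟩ := Finset.card_pos.mp (n.zero_le.trans_lt hg)
  refine ⟨f q₀, hg.trans_le (Finset.card_le_card fun q hq => ?_)⟩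
  rw [Finset.mem_filter] at hq hq₀ ⊢
  refine ⟨hq.1, fun x hx => ?_⟩
  exact (congrFun hq₀.2 ⟨x, hx⟩).trans (congrFun hq.2 ⟨x, hx⟩).symm

namespace CNF

variable {V : Type} (F : CNF V)

lemma inc_adj_inl_inr {x : V} {c : F.ι} :
    F.inc.Adj (Sum.inl x) (Sum.inr c) ↔
      c ∈ F.cls ∧ ((x, true) ∈ F.lit c ∨ (x, false) ∈ F.lit c) := by
  simp [CNF.inc]

lemma mem_cls_of_inc_adj {c : F.ι} {u : V ⊕ F.ι} (h : F.inc.Adj (Sum.inr c) u) : c ∈ F.cls := by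
  rcases u with x | c'
  · exact ((F.inc_adj_inl_inr).mp h.symm).1
  · simp [CNF.inc] at h

lemma reduce_inc_adj_iff [DecidableEq V] {X : Finset V} {τ : V → Bool} {a b : V ⊕ F.ι} :
    (F.reduce X τ).inc.Adj a b ↔ F.inc.Adj a b ∧ a ∈ F.surv X τ ∧ b ∈ F.surv X τ := by
  rcases a with x | c <;> rcases b with y | d <;>
    simp [CNF.inc, CNF.reduce, CNF.surv, -Prod.forall] <;> erw [Finset.mem_filter] <;> tauto

def OccursIn (S : Set (V ⊕ F.ι)) (l : V × Bool) : Prop :=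
  ∃ c ∈ F.cls, Sum.inr c ∈ S ∧ l ∈ F.lit c

open Classical in
noncomputable def falsifier (S : Set (V ⊕ F.ι)) (x : V) : Bool :=
  decide ¬ F.OccursIn S (x, true)

lemma inr_mem_surv_of_forall_eq_falsifier {S : Set (V ⊕ F.ι)} {X : Finset V} {τ : V → Bool}
    (hτ : ∀ x ∈ X, τ x = F.falsifier S x)
    (hS : ∀ x ∈ X, ¬ (F.OccursIn S (x, true) ∧ F.OccursIn S (x, false)))
    {c : F.ι} (hc : c ∈ F.cls) (hcS : Sum.inr c ∈ S) : Sum.inr c ∈ F.surv X τ := by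
  rintro ⟨x, p⟩ hl hx
  have hocc : F.OccursIn S (x, p) := ⟨c, hc, hcS, hl⟩
  rw [hτ x hx]
  cases p
  · simpa [falsifier] using fun h => hS x hx ⟨h, hocc⟩
  · simpa [falsifier] using hocc

end CNF

namespace ValidOT

variable {α κ : Type} {G : SimpleGraph α} {W : G.Subgraph} {Z : Finset α} {t : ℕ} {Q : Finset κ}
  {N : κ → Finset α} {P : Set (Set α)} {R : κ → Set α} (hOT : ValidOT G W Z t Q N P R)
  {q : κ} (hq : q ∈ Q)
include hOT hq

lemma region_subset : R q ⊆ W.verts := (hOT.1 _ (hOT.2.2.2.1 q hq)).1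

lemma connected_region : (W.induce (R q)).Connected := (hOT.1 _ (hOT.2.2.2.1 q hq)).2

lemma notMem_region_and_exists_adj {z : α} (hz : z ∈ N q) : z ∉ R q ∧ ∃ w ∈ R q, G.Adj z w :=
  hOT.2.2.2.2.2.1 q hq z hz

lemma nb_le_card : nb t ≤ (N q).card := (hOT.2.2.2.2.2.2.2.2.1 q hq).1

lemma eq_of_adj_of_notMem {v v' z z' : α} (hv : v ∈ R q) (hv' : v' ∈ R q) (hz : z ∈ Z)
    (hz' : z' ∈ Z) (hvz : G.Adj v z) (hv'z' : G.Adj v' z') (hzN : z ∉ N q) (hz'N : z' ∉ N q) :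
    v = v' :=
  hOT.2.2.2.2.2.2.2.2.2 q hq v hv v' hv' ⟨z, hz, hvz, hzN⟩ ⟨z', hz', hv'z', hz'N⟩

/-- The private neighbour of `q` is a neighbour of `q'`, so `R q ≠ R q'`. -/
lemma disjoint_regions_of_eq_nbrs {q' : κ} (hq' : q' ∈ Q) (hne : q ≠ q') (hN : N q = N q') :
    Disjoint (R q) (R q') := by
  obtain ⟨-, hPdisj, -, hRP, -, -, hpriv, -⟩ := hOT
  refine hPdisj _ (hRP q hq) _ (hRP q' hq') fun hR => ?_
  obtain ⟨z, hz, hz'⟩ := hpriv q hq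
  exact hz' q' hq' hne.symm hR.symm (hN ▸ hz)

end ValidOT

lemma ValidOT.pairwiseDisjoint_regions {α κ ιO : Type} {G : SimpleGraph α} {Os : Finset ιO}
    {Wsub : ιO → G.Subgraph}
    (hOdisj : ∀ i ∈ Os, ∀ j ∈ Os, i ≠ j → Disjoint (Wsub i).verts (Wsub j).verts)
    {Z : Finset α} {t : ℕ} {Q : ιO → Finset κ} {N : κ → Finset α} {P : ιO → Set (Set α)}
    {R : ιO → κ → Set α}
    (hOT : ∀ i ∈ Os, ValidOT G (Wsub i) Z t (Q i) N (P i) (R i)) {Qs : Finset κ} {iq : κ → ιO}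
    (hiq : ∀ q ∈ Qs, iq q ∈ Os ∧ q ∈ Q (iq q)) {L : Finset α} (hN : ∀ q ∈ Qs, N q = L) :
    (Qs : Set κ).PairwiseDisjoint fun q => R (iq q) q := by
  intro q hq q' hq' hne
  obtain ⟨hi, hqi⟩ := hiq q hq
  obtain ⟨hi', hqi'⟩ := hiq q' hq'
  by_cases heq : iq q = iq q'
  · simp only [Function.onFun, heq]
    exact (hOT _ hi').disjoint_regions_of_eq_nbrs (heq ▸ hqi) hqi' hne
      ((hN q hq).trans (hN q' hq').symm)
  · exact (hOdisj _ hi _ hi' heq).mono ((hOT _ hi).region_subset hqi)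
      ((hOT _ hi').region_subset hqi')

namespace ValidOT

variable {V κ : Type} {F : CNF V} {W : F.inc.Subgraph} {Z : Finset (V ⊕ F.ι)}
  {t : ℕ} {Q : Finset κ} {N : κ → Finset (V ⊕ F.ι)} {P : Set (Set (V ⊕ F.ι))}
  {R : κ → Set (V ⊕ F.ι)} (hOT : ValidOT F.inc W Z t Q N P R) {q : κ} (hq : q ∈ Q)
include hOT hq

/-- A variable occurring with both signs in the wall lies in `Z \ N q`, so all its occurrences
in `R q` are in the single vertex of `R q` adjacent to `Z \ N q`. -/
lemma not_occursIn_region_both {x : V}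
    (hxZ : F.OccursIn W.verts (x, true) → F.OccursIn W.verts (x, false) →
      Sum.inl x ∈ Z ∧ Sum.inl x ∉ N q) :
    ¬ (F.OccursIn (R q) (x, true) ∧ F.OccursIn (R q) (x, false)) := by
  rintro ⟨⟨c, hc, hcR, hxc⟩, ⟨c', hc', hc'R, hxc'⟩⟩
  have hsub := hOT.region_subset hq
  obtain ⟨hxZ, hxN⟩ := hxZ ⟨c, hc, hsub hcR, hxc⟩ ⟨c', hc', hsub hc'R, hxc'⟩
  have hadj : F.inc.Adj (Sum.inr c) (Sum.inl x) := (F.inc_adj_inl_inr.mpr ⟨hc, .inl hxc⟩).symm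
  have hadj' : F.inc.Adj (Sum.inr c') (Sum.inl x) := (F.inc_adj_inl_inr.mpr ⟨hc', .inr hxc'⟩).symm
  obtain rfl : c = c' := Sum.inr_injective <|
    hOT.eq_of_adj_of_notMem hq hcR hc'R hxZ hxZ hadj hadj' hxN hxN
  exact F.ok c hc x ⟨hxc, hxc'⟩

variable
  {X : Finset V} {τ : V → Bool} (hXW : ∀ x ∈ X, Sum.inl x ∉ W.verts)
  (hXZ : ∀ x ∈ X, F.OccursIn W.verts (x, true) → F.OccursIn W.verts (x, false) →
    Sum.inl x ∈ Z ∧ Sum.inl x ∉ N q)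
  (hτ : ∀ x ∈ X, τ x = F.falsifier (R q) x)
include hXW hXZ hτ

lemma mem_surv_of_adj {v u : V ⊕ F.ι} (hv : v ∈ R q) (hvu : F.inc.Adj v u) : v ∈ F.surv X τ := by
  rcases v with x | c
  · exact fun hx => hXW x hx (hOT.region_subset hq hv)
  · exact F.inr_mem_surv_of_forall_eq_falsifier hτ
      (fun x hx => hOT.not_occursIn_region_both hq (hXZ x hx)) (F.mem_cls_of_inc_adj hvu) hv

lemma preconnectedOn_reduce [DecidableEq V] : (F.reduce X τ).inc.PreconnectedOn (R q) :=
  (hOT.connected_region hq).preconnectedOn_of_adj fun _ hu _ hv huv =>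
    have huv := W.adj_sub huv.2.2
    F.reduce_inc_adj_iff.mpr ⟨huv, hOT.mem_surv_of_adj hq hXW hXZ hτ hu huv,
      hOT.mem_surv_of_adj hq hXW hXZ hτ hv huv.symm⟩

lemma notMem_region_and_exists_reduce_adj [DecidableEq V] {z : V ⊕ F.ι} (hz : z ∈ N q)
    (hzX : z ∈ F.surv X τ) :
    z ∉ R q ∧ ∃ w ∈ R q, (F.reduce X τ).inc.Adj z w := by
  obtain ⟨hzR, w, hw, hzw⟩ := hOT.notMem_region_and_exists_adj hq hz
  exact ⟨hzR, w, hw, F.reduce_inc_adj_iff.mpr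
    ⟨hzw, hzX, hOT.mem_surv_of_adj hq hXW hXZ hτ hw hzw.symm⟩⟩

end ValidOT

theorem stmt7_general {V : Type} [DecidableEq V] (t k : ℕ) (F : CNF V)
    {ιO : Type} (Os : Finset ιO) (Wsub : ιO → F.inc.Subgraph)
    (hOdisj : ∀ i ∈ Os, ∀ j ∈ Os, i ≠ j → Disjoint (Wsub i).verts (Wsub j).verts)
    (Z : Finset (V ⊕ F.ι)) (hZvar : ∀ z ∈ Z, ∃ x : V, z = Sum.inl x ∧ x ∈ F.vars)
    {κ : Type} (Q : ιO → Finset κ)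
    (N : κ → Finset (V ⊕ F.ι)) (P : ιO → Set (Set (V ⊕ F.ι))) (R : ιO → κ → Set (V ⊕ F.ι))
    (hOT : ∀ i ∈ Os, ValidOT F.inc (Wsub i) Z t (Q i) N (P i) (R i))
    (B : Finset V) (hB : F.strongBackdoor t B) (hBk : B.card ≤ k)
    (hBW : ∀ i ∈ Os, ∀ b ∈ B, Sum.inl b ∉ (Wsub i).verts)
    (hBZ : ∀ b ∈ B,
      (∃ i ∈ Os, ∃ c c' : F.ι, Sum.inr c ∈ (Wsub i).verts ∧ Sum.inr c' ∈ (Wsub i).verts ∧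
        (b, true) ∈ F.lit c ∧ (b, false) ∈ F.lit c') → Sum.inl b ∈ Z)
    (L : Finset (V ⊕ F.ι)) (hLZ : L ⊆ Z)
    (Qbig : Finset κ) (hQbig : ∀ q ∈ Qbig, ∃ i ∈ Os, q ∈ Q i)
    (hQbigN : ∀ q ∈ Qbig, N q = L)
    (hQbigCard : t * 2 ^ k + 1 ≤ Qbig.card) :
    ∃ b ∈ B, Sum.inl b ∈ L := by
  classical
  by_contra! hLB
  have : Nonempty ιO := by
    obtain ⟨q, hq⟩ := Finset.card_pos.mp (by omega : 0 < Qbig.card)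
    obtain ⟨i, -⟩ := hQbig q hq
    exact ⟨i⟩
  choose! iq hiqOs hiqQ using hQbig
  obtain ⟨τ, hτ⟩ := exists_lt_card_filter_forall_eq B Qbig (fun q => F.falsifier (R (iq q) q))
    (n := t) <| (Nat.mul_le_mul_right t (Nat.pow_le_pow_right two_pos hBk)).trans_lt <| by
      rw [mul_comm]; omega
  set Qs := Qbig.filter fun q => ∀ x ∈ B, τ x = F.falsifier (R (iq q) q) x
  have hQs (q) (hq : q ∈ Qs) := Finset.mem_filter.mp hq
  have hXZ : ∀ q ∈ Qbig, ∀ x ∈ B, F.OccursIn (Wsub (iq q)).verts (x, true) →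
      F.OccursIn (Wsub (iq q)).verts (x, false) → Sum.inl x ∈ Z ∧ Sum.inl x ∉ N q := by
    rintro q hq x hx ⟨c, -, hc, hxc⟩ ⟨c', -, hc', hxc'⟩
    exact ⟨hBZ x hx ⟨iq q, hiqOs q hq, c, c', hc, hc', hxc, hxc'⟩, hQbigN q hq ▸ hLB x hx⟩
  obtain ⟨q₀, hq₀⟩ := Finset.card_pos.mp (t.zero_le.trans_lt hτ)
  refine not_twLE_of_forall_adj (Qs := Qs) (R := fun q => R (iq q) q) (L := L) (by omega)
    (fun q hq => ?_) (fun q hq => ?_)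
    (ValidOT.pairwiseDisjoint_regions hOdisj hOT
      (fun q hq => ⟨hiqOs q (hQs q hq).1, hiqQ q (hQs q hq).1⟩) fun q hq => hQbigN q (hQs q hq).1)
    ?_ (fun z hz q hq => ?_) (hB.2 τ)
  · obtain ⟨hq, hτq⟩ := hQs q hq
    exact (hOT _ (hiqOs q hq)).preconnectedOn_reduce (hiqQ q hq) (hBW _ (hiqOs q hq)) (hXZ q hq)
      hτq
  · obtain ⟨hq, -⟩ := hQs q hq
    exact ((hOT _ (hiqOs q hq)).connected_region (hiqQ q hq)).nonempty
  · obtain ⟨hq₀, -⟩ := hQs q₀ hq₀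
    exact hQbigN q₀ hq₀ ▸
      (add_two_le_nb t).trans ((hOT _ (hiqOs q₀ hq₀)).nb_le_card (hiqQ q₀ hq₀))
  · obtain ⟨hq, hτq⟩ := hQs q hq
    obtain ⟨x, rfl, -⟩ := hZvar z (hLZ hz)
    exact (hOT _ (hiqOs q hq)).notMem_region_and_exists_reduce_adj (hiqQ q hq)
      (hBW _ (hiqOs q hq)) (hXZ q hq) hτq ((hQbigN q hq).symm ▸ hz) fun hx => hLB x hx hz

/-- soundness of Rule "Multiple Neighborhoods": with a family `O_s` of disjoint
wall-obstructions in `inc(F)`, valid obstruction-templates for each of them over a common set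
`Z`, and a strong `W_{≤t}`-backdoor set `B` of size `≤ k` killing no obstruction internally and
whose external killers lie in `Z`: if `L ⊆ Z` is the common neighborhood of at least
`t·2^k + 1` vertices of `Q_m`, then `B ∩ L ≠ ∅`. -/
theorem stmt7 {V : Type} [DecidableEq V] (t k : ℕ) (hk : 1 ≤ k) (F : CNF V)
    {ιO : Type} (Os : Finset ιO) (Wsub : ιO → F.inc.Subgraph)
    (hOdisj : ∀ i ∈ Os, ∀ j ∈ Os, i ≠ j → Disjoint (Wsub i).verts (Wsub j).verts)
    (hOsub : ∀ i ∈ Os, IsSubdivisionOf (Wsub i).coe (Wall (2 * t + 2)))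
    (Z : Finset (V ⊕ F.ι)) (hZvar : ∀ z ∈ Z, ∃ x : V, z = Sum.inl x ∧ x ∈ F.vars)
    (hZW : ∀ i ∈ Os, ∀ z ∈ Z, z ∉ (Wsub i).verts)
    {κ : Type} (Q : ιO → Finset κ)
    (hQdisj : ∀ i ∈ Os, ∀ j ∈ Os, i ≠ j → Disjoint (Q i) (Q j))
    (N : κ → Finset (V ⊕ F.ι)) (P : ιO → Set (Set (V ⊕ F.ι))) (R : ιO → κ → Set (V ⊕ F.ι))
    (hOT : ∀ i ∈ Os, ValidOT F.inc (Wsub i) Z t (Q i) N (P i) (R i))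
    (B : Finset V) (hB : F.strongBackdoor t B) (hBk : B.card ≤ k)
    (hBW : ∀ i ∈ Os, ∀ b ∈ B, Sum.inl b ∉ (Wsub i).verts)
    (hBZ : ∀ b ∈ B,
      (∃ i ∈ Os, ∃ c c' : F.ι, Sum.inr c ∈ (Wsub i).verts ∧ Sum.inr c' ∈ (Wsub i).verts ∧
        (b, true) ∈ F.lit c ∧ (b, false) ∈ F.lit c') → Sum.inl b ∈ Z)
    (L : Finset (V ⊕ F.ι)) (hLZ : L ⊆ Z)
    (Qbig : Finset κ) (hQbig : ∀ q ∈ Qbig, ∃ i ∈ Os, q ∈ Q i)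
    (hQbigN : ∀ q ∈ Qbig, N q = L)
    (hQbigCard : t * 2 ^ k + 1 ≤ Qbig.card) :
    ∃ b ∈ B, Sum.inl b ∈ L :=
  stmt7_general t k F Os Wsub hOdisj Z hZvar Q N P R hOT B hB hBk hBW hBZ L hLZ Qbig hQbig hQbigN
    hQbigCard
end

section
/- Let t ≥ 0 be an integer, F a CNF formula, B a strong W_{≤t}-backdoor set of F, and W a subgraph of inc(F) that is a subdivision of the (2t+2)-wall with V(W) ∩ B = ∅. Then some variable x ∈ B kills W externally; in particular, W contains a clause c with x ∈ lit(c) and a clause c' with ¬x ∈ lit(c'). -/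
/-!
Suppose no variable of `B` occurs positively in one clause of `W` and negatively in another.
Then the assignment `τ` setting to false exactly those variables of `B` that occur positively in
clauses of `W` satisfies no clause of `W`, so `W` survives in `F[τ]` and the `(2t+2)`-wall is a
minor of `inc(F[τ])`. The wall carries a bramble of order `t + 2`, brambles lift along minors, and
by the Helly property of subtrees some bag of every tree decomposition meets all sets of a
bramble; hence `inc(F[τ])` has treewidth above `t`, contradicting that `B` is a strong backdoor.
-/

namespace SimpleGraph

section Connectivity

variable {α β : Type*} {G : SimpleGraph α}

theorem Preconnected.forall_of_adj (hG : G.Preconnected) {P : α → Prop}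
    (hP : ∀ ⦃x y⦄, G.Adj x y → P x → P y) {x : α} (hx : P x) (y : α) : P y := by
  obtain ⟨p⟩ := hG x y
  induction p with
  | nil => exact hx
  | cons hadj _ ih => exact ih (hP hadj hx)

theorem Reachable.induce_mono {s t : Set α} (hst : s ⊆ t) {x y : s}
    (h : (G.induce s).Reachable x y) : (G.induce t).Reachable ⟨x, hst x.2⟩ ⟨y, hst y.2⟩ :=
  h.map (induceHomOfLE G hst).toHom

theorem connected_induce_of_exists_adj_lt {S : Set α} {x₀ : α} (hx₀ : x₀ ∈ S) (μ : α → ℕ)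
    (h : ∀ x ∈ S, x ≠ x₀ → ∃ y ∈ S, G.Adj x y ∧ μ y < μ x) : (G.induce S).Connected := by
  have key : ∀ n, ∀ x (hx : x ∈ S), μ x = n → (G.induce S).Reachable ⟨x, hx⟩ ⟨x₀, hx₀⟩ := by
    intro n
    induction n using Nat.strong_induction_on with
    | _ n ih =>
      rintro x hx rfl
      by_cases hxx : x = x₀
      · subst hxx; rfl
      obtain ⟨y, hy, hxy, hlt⟩ := h x hx hxx
      exact (Adj.reachable (G := G.induce S) (u := ⟨x, hx⟩) (v := ⟨y, hy⟩) hxy).trans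
        (ih _ hlt y hy rfl)
  rw [connected_iff_exists_forall_reachable]
  exact ⟨⟨x₀, hx₀⟩, fun ⟨x, hx⟩ => (key _ x hx rfl).symm⟩

theorem connected_induce_biUnion {H : SimpleGraph β} {X : Set β} {C : β → Set α}
    (hX : (H.induce X).Connected) (hC : ∀ u ∈ X, (G.induce (C u)).Connected)
    (hadj : ∀ u ∈ X, ∀ v ∈ X, H.Adj u v → ∃ a ∈ C u, ∃ b ∈ C v, a = b ∨ G.Adj a b) :
    (G.induce (⋃ u ∈ X, C u)).Connected := by
  set S := ⋃ u ∈ X, C u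
  have hsub : ∀ u ∈ X, C u ⊆ S := fun u hu => Set.subset_biUnion_of_mem hu
  obtain ⟨⟨u₀, hu₀⟩⟩ := hX.nonempty
  obtain ⟨⟨a₀, ha₀⟩⟩ := (hC u₀ hu₀).nonempty
  have hreach : ∀ u (hu : u ∈ X) {a b} (ha : a ∈ C u) (hb : b ∈ C u),
      (G.induce S).Reachable ⟨a, hsub u hu ha⟩ ⟨b, hsub u hu hb⟩ := fun u hu a b ha hb =>
    Reachable.induce_mono (hsub u hu) ((hC u hu).preconnected ⟨a, ha⟩ ⟨b, hb⟩)
  let P : X → Prop := fun u =>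
    ∀ a (ha : a ∈ C u), (G.induce S).Reachable ⟨a₀, hsub u₀ hu₀ ha₀⟩ ⟨a, hsub u u.2 ha⟩
  have hP : ∀ u : X, P u := by
    refine hX.preconnected.forall_of_adj (x := ⟨u₀, hu₀⟩) ?_ (fun a ha => hreach u₀ hu₀ ha₀ ha)
    rintro ⟨u, hu⟩ ⟨v, hv⟩ huv hPu c hc
    obtain ⟨a, ha, b, hb, rfl | hab⟩ := hadj u hu v hv huv
    · exact (hPu a ha).trans (hreach v hv hb hc)
    · exact ((hPu a ha).trans (Adj.reachable (G := G.induce S)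
        (u := ⟨a, hsub u hu ha⟩) (v := ⟨b, hsub v hv hb⟩) hab)).trans (hreach v hv hb hc)
  rw [connected_iff_exists_forall_reachable]
  refine ⟨⟨a₀, hsub u₀ hu₀ ha₀⟩, fun ⟨a, ha⟩ => ?_⟩
  obtain ⟨u, hu, hau⟩ := Set.mem_iUnion₂.mp ha
  exact hP ⟨u, hu⟩ a hau

theorem Connected.induce_image {G' : SimpleGraph β} (f : G →g G') {s : Set α}
    (hs : (G.induce s).Connected) : (G'.induce (f '' s)).Connected :=
  hs.map
    (⟨fun x : s => ⟨f x, x, x.2, rfl⟩, fun h => f.map_adj h⟩ : G.induce s →g G'.induce (f '' s))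
    (by rintro ⟨_, x, hx, rfl⟩; exact ⟨⟨x, hx⟩, rfl⟩)

theorem Walk.IsPath.mem_support_dropLast_iff {u v : α} {p : G.Walk u v} (hp : p.IsPath)
    (huv : u ≠ v) {z : α} :
    z ∈ p.dropLast.support ↔ z ∈ p.support ∧ z ≠ v := by
  have hnil : ¬p.Nil := fun h => huv h.eq
  have hnd := hp.support_nodup
  rw [← Walk.support_dropLast_concat hnil] at hnd ⊢
  rw [List.nodup_append] at hnd
  simp only [List.mem_append, List.mem_singleton]
  exact ⟨fun hz => ⟨.inl hz, hnd.2.2 z hz v (List.mem_singleton_self v)⟩,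
    fun ⟨hz, hzv⟩ => hz.resolve_right hzv⟩

end Connectivity

section PathClosed

variable {ι : Type*} {T : SimpleGraph ι}

/-- In a tree, the path-closed vertex sets are exactly the vertex sets of subtrees. -/
def IsPathClosed (T : SimpleGraph ι) (S : Set ι) : Prop :=
  ∀ ⦃i j : ι⦄ (p : T.Walk i j), p.IsPath → i ∈ S → j ∈ S → ∀ k ∈ p.support, k ∈ S

theorem IsPathClosed.inter {S S' : Set ι} (h : IsPathClosed T S) (h' : IsPathClosed T S') :
    IsPathClosed T (S ∩ S') :=
  fun _ _ p hp hi hj k hk => ⟨h p hp hi.1 hj.1 k hk, h' p hp hi.2 hj.2 k hk⟩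

theorem IsAcyclic.isPathClosed (hT : T.IsAcyclic) {S : Set ι} (hS : (T.induce S).Connected) :
    IsPathClosed T S := by
  classical
  intro i j p hp hi hj k hk
  obtain ⟨q⟩ := hS.preconnected ⟨i, hi⟩ ⟨j, hj⟩
  let q' : T.Walk i j := q.map (Embedding.induce S).toHom
  have hpq : p = q'.bypass :=
    congrArg Subtype.val ((hT.subsingleton_path i j).elim ⟨p, hp⟩ ⟨q'.bypass, q'.bypass_isPath⟩)
  have hk' : k ∈ (q.map (Embedding.induce S).toHom).support :=
    q'.support_bypass_subset_support (hpq ▸ hk)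
  rw [Walk.support_map, List.mem_map] at hk'
  obtain ⟨x, -, rfl⟩ := hk'
  exact x.2

theorem IsPathClosed.not_adj (hT : T.Preconnected) {A B : Set ι} (hA : IsPathClosed T A)
    (hB : IsPathClosed T B) (hAB : (A ∩ B).Nonempty) {x y : ι} (hxA : x ∈ A) (hxB : x ∉ B)
    (hyB : y ∈ B) (hyA : y ∉ A) : ¬T.Adj x y := by
  classical
  intro hxy
  obtain ⟨b, hbA, hbB⟩ := hAB
  obtain ⟨p, hp⟩ := (hT x b).some.toPath
  have hyp : y ∉ p.support := fun hy => hyA (hA p hp hxA hbA y hy)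
  exact hxB (hB (Walk.cons hxy.symm p) (hp.cons hyp) hyB hbB x (by simp))

theorem IsPathClosed.inter_inter_nonempty (hT : T.Preconnected) {S₁ S₂ S₃ : Set ι}
    (h₁ : IsPathClosed T S₁) (h₂ : IsPathClosed T S₂) (h₃ : IsPathClosed T S₃)
    (h₁₂ : (S₁ ∩ S₂).Nonempty) (h₂₃ : (S₂ ∩ S₃).Nonempty) (h₁₃ : (S₁ ∩ S₃).Nonempty) :
    (S₁ ∩ S₂ ∩ S₃).Nonempty := by
  classical
  obtain ⟨a, ha₁, ha₂⟩ := h₁₂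
  obtain ⟨b, hb₂, hb₃⟩ := h₂₃
  obtain ⟨c, hc₁, hc₃⟩ := h₁₃
  let P := (hT a b).some.toPath
  let Q := (hT b c).some.toPath
  let R := ((P : T.Walk a b).append (Q : T.Walk b c)).bypass
  have hR₁ : ∀ z ∈ R.support, z ∈ S₁ := h₁ R (Walk.bypass_isPath _) ha₁ hc₁
  have hR₂₃ : ∀ z ∈ R.support, z ∈ S₂ ∨ z ∈ S₃ := by
    intro z hz
    rcases (Walk.mem_support_append_iff _ _).mp (Walk.support_bypass_subset_support _ hz)
      with hz | hz
    · exact .inl (h₂ P P.2 ha₂ hb₂ z hz)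
    · exact .inr (h₃ Q Q.2 hb₃ hc₃ z hz)
  by_contra hempty
  have hc₂ : c ∉ S₂ := fun hc₂ => hempty ⟨c, ⟨hc₁, hc₂⟩, hc₃⟩
  -- `R` runs from `S₂` to `S₃` inside `S₂ ∪ S₃`, so it crosses an edge from `S₂ \ S₃` to `S₃ \ S₂`.
  obtain ⟨d, hd, hd₂, hd₂'⟩ := R.exists_boundary_dart S₂ ha₂ hc₂
  have hd₃ : d.snd ∈ S₃ := (hR₂₃ _ (R.dart_snd_mem_support_of_mem_darts hd)).resolve_left hd₂'
  have hd₃' : d.fst ∉ S₃ :=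
    fun h => hempty ⟨_, ⟨hR₁ _ (R.dart_fst_mem_support_of_mem_darts hd), hd₂⟩, h⟩
  exact h₂.not_adj hT h₃ ⟨b, hb₂, hb₃⟩ hd₂ hd₃' hd₃ hd₂' d.adj

theorem IsPathClosed.exists_forall_mem (hT : T.Preconnected) {κ : Type*} {f : κ → Set ι}
    (hf : ∀ a, IsPathClosed T (f a)) (hpair : ∀ a b, (f a ∩ f b).Nonempty) {s : Finset κ}
    (hs : s.Nonempty) : ∃ i, ∀ a ∈ s, i ∈ f a := by
  induction hs using Finset.Nonempty.cons_induction generalizing f with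
  | singleton a =>
    obtain ⟨i, hi, -⟩ := hpair a a
    exact ⟨i, by simpa using hi⟩
  | cons a s has hs ih =>
    have hpair' : ∀ b c, ((f b ∩ f a) ∩ (f c ∩ f a)).Nonempty := fun b c => by
      obtain ⟨i, ⟨hb, hc⟩, ha⟩ := inter_inter_nonempty hT (hf b) (hf c) (hf a)
        (hpair b c) (hpair c a) (hpair b a)
      exact ⟨i, ⟨hb, ha⟩, hc, ha⟩
    obtain ⟨i, hi⟩ := ih (fun b => (hf b).inter (hf a)) hpair'
    obtain ⟨b, hb⟩ := hs
    refine ⟨i, ?_⟩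
    simp only [Finset.mem_cons, forall_eq_or_imp]
    exact ⟨(hi b hb).2, fun c hc => (hi c hc).1⟩

end PathClosed

section Bramble

variable {α β : Type}

def IsBramble (G : SimpleGraph α) {κ : Type} (X : κ → Set α) : Prop :=
  (∀ q, (G.induce (X q)).Connected) ∧ ∀ q q', ∃ a ∈ X q, ∃ b ∈ X q', a = b ∨ G.Adj a b

def IsHittingSet {κ : Type} (X : κ → Set α) (S : Finset α) : Prop :=
  ∀ q, ∃ x ∈ S, x ∈ X q

def HasBrambleOfOrderAtLeast (G : SimpleGraph α) (k : ℕ) : Prop :=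
  ∃ (κ : Type) (X : κ → Set α), Finite κ ∧ G.IsBramble X ∧
    ∀ S : Finset α, IsHittingSet X S → k ≤ S.card

theorem exists_isHittingSet_of_twLE {G : SimpleGraph α} {t : ℕ} (htw : twLE G t) {κ : Type}
    [Finite κ] {X : κ → Set α} (hX : G.IsBramble X) :
    ∃ S : Finset α, S.card ≤ t + 1 ∧ IsHittingSet X S := by
  obtain ⟨ι, T, bag, hT, hedge, hconn, hcard⟩ := htw
  cases isEmpty_or_nonempty κ
  · exact ⟨∅, by simp, fun q => isEmptyElim q⟩
  have : Fintype κ := Fintype.ofFinite κ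
  let Y : κ → Set ι := fun q => ⋃ v ∈ X q, {i | v ∈ bag i}
  have hY : ∀ q, IsPathClosed T (Y q) := fun q =>
    hT.isAcyclic.isPathClosed <| connected_induce_biUnion (hX.1 q) (fun v _ => hconn v)
      fun u _ v _ huv => by
        obtain ⟨i, hu, hv⟩ := hedge u v huv
        exact ⟨i, hu, i, hv, .inl rfl⟩
  have hpair : ∀ q q', (Y q ∩ Y q').Nonempty := by
    intro q q'
    obtain ⟨a, ha, b, hb, rfl | hab⟩ := hX.2 q q'
    · obtain ⟨⟨i, hi⟩⟩ := (hconn a).nonempty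
      exact ⟨i, Set.mem_biUnion ha hi, Set.mem_biUnion hb hi⟩
    · obtain ⟨i, hia, hib⟩ := hedge a b hab
      exact ⟨i, Set.mem_biUnion ha hia, Set.mem_biUnion hb hib⟩
  obtain ⟨i, hi⟩ := IsPathClosed.exists_forall_mem hT.connected.preconnected hY hpair
    Finset.univ_nonempty
  refine ⟨bag i, hcard i, fun q => ?_⟩
  obtain ⟨v, hv, hvi⟩ := Set.mem_iUnion₂.mp (hi q (Finset.mem_univ q))
  exact ⟨v, hvi, hv⟩

theorem HasBrambleOfOrderAtLeast.le_of_twLE {G : SimpleGraph α} {k t : ℕ}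
    (h : G.HasBrambleOfOrderAtLeast k) (htw : twLE G t) : k ≤ t + 1 := by
  obtain ⟨κ, X, hκ, hX, horder⟩ := h
  obtain ⟨S, hS, hhit⟩ := exists_isHittingSet_of_twLE htw hX
  exact (horder S hhit).trans hS

theorem HasBrambleOfOrderAtLeast.of_hasMinor {G : SimpleGraph α} {H : SimpleGraph β} {k : ℕ}
    (hGH : HasMinor G H) (h : H.HasBrambleOfOrderAtLeast k) : G.HasBrambleOfOrderAtLeast k := by
  classical
  obtain ⟨C, hne, hC, hdisj, hadj⟩ := hGH
  obtain ⟨κ, X, hκ, ⟨hXconn, hXtouch⟩, horder⟩ := h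
  refine ⟨κ, fun q => ⋃ u ∈ X q, C u, hκ, ⟨fun q => ?_, fun q q' => ?_⟩, fun S hS => ?_⟩
  · refine connected_induce_biUnion (hXconn q) (fun u _ => hC u) fun u _ v _ huv => ?_
    obtain ⟨a, ha, b, hb, hab⟩ := hadj u v huv
    exact ⟨a, ha, b, hb, .inr hab⟩
  · obtain ⟨u, hu, v, hv, rfl | huv⟩ := hXtouch q q'
    · obtain ⟨x, hx⟩ := hne u
      exact ⟨x, Set.mem_biUnion hu hx, x, Set.mem_biUnion hv hx, .inl rfl⟩
    · obtain ⟨a, ha, b, hb, hab⟩ := hadj u v huv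
      exact ⟨a, Set.mem_biUnion hu ha, b, Set.mem_biUnion hv hb, .inr hab⟩
  -- each vertex of `S` lies in at most one branch set; collect those branch sets
  let S' : Finset β := (S.subtype fun x => ∃ u, x ∈ C u).image fun x => x.2.choose
  refine (horder S' fun q => ?_).trans (Finset.card_image_le.trans
    ((Finset.card_subtype _ _).trans_le (Finset.card_filter_le _ _)))
  obtain ⟨x, hxS, hxq⟩ := hS q
  obtain ⟨u, hu, hxu⟩ := Set.mem_iUnion₂.mp hxq
  have hx : ∃ u, x ∈ C u := ⟨u, hxu⟩
  have hchoose : hx.choose = u := by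
    by_contra hne
    exact Set.disjoint_left.mp (hdisj _ _ hne) hx.choose_spec hxu
  exact ⟨hx.choose, Finset.mem_image.mpr ⟨⟨x, hx⟩, by simpa using hxS, rfl⟩, hchoose ▸ hu⟩

end Bramble

end SimpleGraph

open SimpleGraph

theorem HasMinor.map {α β γ : Type} {G : SimpleGraph α} {G' : SimpleGraph γ} {H : SimpleGraph β}
    (h : HasMinor G H) (f : G →g G') (hf : Function.Injective f) : HasMinor G' H := by
  obtain ⟨C, hne, hconn, hdisj, hadj⟩ := h
  refine ⟨fun u => f '' C u, fun u => (hne u).image f, fun u => (hconn u).induce_image f,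
    fun u v huv => (Set.disjoint_image_iff hf).mpr (hdisj u v huv), fun u v huv => ?_⟩
  obtain ⟨a, ha, b, hb, hab⟩ := hadj u v huv
  exact ⟨f a, Set.mem_image_of_mem f ha, f b, Set.mem_image_of_mem f hb, f.map_adj hab⟩

section Subdivision

variable {γ β : Type} {Γ : SimpleGraph γ} {H : SimpleGraph β} [LinearOrder β] {b : β → γ}
  (p : ∀ u v, H.Adj u v → Γ.Walk (b u) (b v))

/-- Orienting every edge of `H` towards its larger end, each subdivision vertex is put into the
branch set of the smaller end. -/
def subdivisionBranchSet (u : β) : Set γ :=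
  insert (b u) (⋃ (v) (h : H.Adj u v) (_ : u < v), {x | x ∈ (p u v h).dropLast.support})

variable {p}

theorem mem_subdivisionBranchSet_of_mem_dropLast {u v : β} {x : γ} (h : H.Adj u v) (huv : u < v)
    (hx : x ∈ (p u v h).dropLast.support) : x ∈ subdivisionBranchSet p u :=
  Set.mem_insert_of_mem _ (Set.mem_iUnion.mpr ⟨_, Set.mem_iUnion₂.mpr ⟨h, huv, hx⟩⟩)

theorem connected_induce_subdivisionBranchSet (u : β) :
    (Γ.induce (subdivisionBranchSet p u)).Connected := by
  refine induce_connected_of_patches (b u) (Set.mem_insert _ _) fun {x} hx => ?_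
  rcases Set.mem_insert_iff.mp hx with rfl | hx
  · exact ⟨{b u}, Set.singleton_subset_iff.mpr hx, rfl, rfl, Reachable.refl _⟩
  · simp only [Set.mem_iUnion] at hx
    obtain ⟨v, h, huv, hx⟩ := hx
    exact ⟨{x | x ∈ (p u v h).dropLast.support},
      fun y hy => mem_subdivisionBranchSet_of_mem_dropLast h huv hy,
      Walk.start_mem_support _, hx, (Walk.connected_induce_support _).preconnected _ _⟩

theorem eq_or_mem_of_mem_subdivisionBranchSet (hb : Function.Injective b)
    (hpath : ∀ u v h, (p u v h).IsPath) {u : β} {x : γ} (hx : x ∈ subdivisionBranchSet p u) :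
    x = b u ∨ ∃ v, ∃ h : H.Adj u v, u < v ∧ x ∈ (p u v h).support ∧ x ≠ b v := by
  rcases Set.mem_insert_iff.mp hx with rfl | hx
  · exact .inl rfl
  · simp only [Set.mem_iUnion, Set.mem_ofPred_eq] at hx
    obtain ⟨v, h, huv, hx⟩ := hx
    exact .inr ⟨v, h, huv, ((hpath u v h).mem_support_dropLast_iff (hb.ne h.ne)).mp hx⟩

theorem disjoint_subdivisionBranchSet (hb : Function.Injective b)
    (hpath : ∀ u v h, (p u v h).IsPath)
    (hbranch : ∀ u v h x, b x ∈ (p u v h).support → x = u ∨ x = v)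
    (hcross : ∀ u v h u' v' h', s(u, v) ≠ s(u', v') →
      ∀ w ∈ (p u v h).support, w ∈ (p u' v' h').support → w = b u ∨ w = b v)
    {u v : β} (huv : u ≠ v) : Disjoint (subdivisionBranchSet p u) (subdivisionBranchSet p v) := by
  have hbranch' : ∀ {u v v'} (h : H.Adj v v'), b u ∈ (p v v' h).support → b u ≠ b v' → u = v :=
    fun h hu hne => (hbranch _ _ h _ hu).resolve_right fun e => hne (e ▸ rfl)
  refine Set.disjoint_left.mpr fun x hxu hxv => ?_
  rcases eq_or_mem_of_mem_subdivisionBranchSet hb hpath hxu with rfl | ⟨u', hu, huu', hxu, hxu'⟩ <;>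
    rcases eq_or_mem_of_mem_subdivisionBranchSet hb hpath hxv with hxv | ⟨v', hv, hvv', hxv, hxv'⟩
  · exact huv (hb hxv)
  · exact huv (hbranch' hv hxv hxv')
  · exact huv (hbranch' hu (hxv ▸ hxu) (hxv ▸ hxu')).symm
  · by_cases hE : s(u, u') = s(v, v')
    · rcases Sym2.eq_iff.mp hE with ⟨rfl, -⟩ | ⟨rfl, rfl⟩
      · exact huv rfl
      · exact lt_asymm huu' hvv'
    · rcases hcross u u' hu v v' hv hE x hxu hxv with rfl | rfl
      · exact huv (hbranch' hv hxv hxv')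
      · exact hxu' rfl

theorem exists_mem_subdivisionBranchSet_adj (hb : Function.Injective b) {u v : β}
    (h : H.Adj u v) (huv : u < v) : ∃ a ∈ subdivisionBranchSet p u, Γ.Adj a (b v) := by
  have hnil : ¬(p u v h).Nil := fun hn => hb.ne h.ne hn.eq
  refine ⟨_, mem_subdivisionBranchSet_of_mem_dropLast h huv ?_, Walk.adj_penultimate hnil⟩
  rw [Walk.support_dropLast hnil]
  exact Walk.penultimate_mem_dropLast_support hnil

end Subdivision

theorem IsSubdivisionOf.hasMinor {γ β : Type} {Γ : SimpleGraph γ} {H : SimpleGraph β}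
    (h : IsSubdivisionOf Γ H) : HasMinor Γ H := by
  let _ : LinearOrder β := IsWellOrder.linearOrder WellOrderingRel
  obtain ⟨b, p, hb, hpath, -, hbranch, hcross, -, -⟩ := h
  refine ⟨subdivisionBranchSet p, fun u => ⟨b u, Set.mem_insert _ _⟩,
    connected_induce_subdivisionBranchSet, fun u v huv =>
      disjoint_subdivisionBranchSet hb hpath hbranch hcross huv, fun u v h => ?_⟩
  rcases lt_or_gt_of_ne h.ne with huv | hvu
  · obtain ⟨a, ha, hab⟩ := exists_mem_subdivisionBranchSet_adj hb h huv
    exact ⟨a, ha, b v, Set.mem_insert _ _, hab⟩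
  · obtain ⟨a, ha, hab⟩ := exists_mem_subdivisionBranchSet_adj hb h.symm hvu
    exact ⟨b u, Set.mem_insert _ _, a, ha, hab.symm⟩

section Wall

open Finset

variable {r : ℕ}

@[simp]
theorem mem_wallVerts {i j : ℕ} : (i, j) ∈ wallVerts r ↔ 1 ≤ i ∧ i ≤ r ∧ 1 ≤ j ∧ j ≤ r :=
  Iff.rfl

@[simp]
theorem wall_adj_mk_iff {i j i' j' : ℕ} {h : (i, j) ∈ wallVerts r} {h' : (i', j') ∈ wallVerts r} :
    (Wall r).Adj ⟨(i, j), h⟩ ⟨(i', j'), h'⟩ ↔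
      j = j' ∧ (i' = i + 1 ∨ i = i' + 1) ∨
      i = i' ∧ (j' = j + 1 ∧ (i + j) % 2 = 0 ∨ j = j' + 1 ∧ (i' + j') % 2 = 0) := by
  rw [mem_wallVerts] at h h'
  simp only [Wall, comap_adj, Function.Embedding.coe_subtype, wallGraph, fromRel_adj, wallRel,
    ne_eq, Prod.mk.injEq, Nat.even_iff]
  omega

-- `(i, j)` lies in row `i` and column `j`; each column is a path, and so are rows `2a - 1`, `2a`
-- taken together.
def wallColumn (r j lo hi : ℕ) : Set (wallVerts r) :=
  {u | u.1.2 = j ∧ lo ≤ u.1.1 ∧ u.1.1 ≤ hi}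

def wallRowPair (r a m : ℕ) : Set (wallVerts r) :=
  {u | (u.1.1 + 1) / 2 = a ∧ u.1.2 ≤ m}

@[simp]
theorem mk_mem_wallColumn {i j c lo hi : ℕ} {h : (i, j) ∈ wallVerts r} :
    ⟨(i, j), h⟩ ∈ wallColumn r c lo hi ↔ j = c ∧ lo ≤ i ∧ i ≤ hi :=
  Iff.rfl

@[simp]
theorem mk_mem_wallRowPair {i j a m : ℕ} {h : (i, j) ∈ wallVerts r} :
    ⟨(i, j), h⟩ ∈ wallRowPair r a m ↔ (i + 1) / 2 = a ∧ j ≤ m :=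
  Iff.rfl

theorem connected_wallColumn {j lo hi : ℕ} (hlo : 1 ≤ lo) (hhi : lo ≤ hi) (hr : hi ≤ r)
    (hj : 1 ≤ j) (hjr : j ≤ r) : ((Wall r).induce (wallColumn r j lo hi)).Connected := by
  refine connected_induce_of_exists_adj_lt (x₀ := ⟨(lo, j), mem_wallVerts.mpr (by omega)⟩)
    (mk_mem_wallColumn.mpr ⟨rfl, le_rfl, hhi⟩) (fun u => u.1.1) ?_
  rintro ⟨⟨i, j'⟩, hv⟩ hmem hne
  rw [mk_mem_wallColumn] at hmem
  obtain ⟨rfl, hi, hi'⟩ := hmem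
  have hilo : i ≠ lo := by rintro rfl; exact hne rfl
  rw [mem_wallVerts] at hv
  exact ⟨⟨(i - 1, j'), mem_wallVerts.mpr (by omega)⟩, mk_mem_wallColumn.mpr (by omega),
    wall_adj_mk_iff.mpr (by omega), by dsimp only; omega⟩

theorem connected_wallRowPair {a m : ℕ} (ha : 1 ≤ a) (har : 2 * a ≤ r) (hm : 1 ≤ m)
    (hmr : m ≤ r) : ((Wall r).induce (wallRowPair r a m)).Connected := by
  -- walk left along the pair, switching rows at every rung
  refine connected_induce_of_exists_adj_lt (x₀ := ⟨(2 * a, 1), mem_wallVerts.mpr (by omega)⟩)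
    (mk_mem_wallRowPair.mpr (by omega)) (fun u => 2 * u.1.2 + (u.1.1 + u.1.2 + 1) % 2) ?_
  rintro ⟨⟨i, j⟩, hv⟩ hmem hne
  rw [mk_mem_wallRowPair] at hmem
  rw [mem_wallVerts] at hv
  dsimp only
  by_cases hij : (i + j) % 2 = 0
  · by_cases hodd : i % 2 = 1
    · exact ⟨⟨(i + 1, j), mem_wallVerts.mpr (by omega)⟩, mk_mem_wallRowPair.mpr (by omega),
        wall_adj_mk_iff.mpr (by omega), by dsimp only; omega⟩
    · exact ⟨⟨(i - 1, j), mem_wallVerts.mpr (by omega)⟩, mk_mem_wallRowPair.mpr (by omega),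
        wall_adj_mk_iff.mpr (by omega), by dsimp only; omega⟩
  · have hj1 : j ≠ 1 := by
      rintro rfl
      exact hne (Subtype.ext (Prod.ext (by dsimp only; omega) rfl))
    exact ⟨⟨(i, j - 1), mem_wallVerts.mpr (by omega)⟩, mk_mem_wallRowPair.mpr (by omega),
      wall_adj_mk_iff.mpr (by omega), by dsimp only; omega⟩

/-- The `t²` crosses (a row pair and a column of the upper left part), together with the bottom
row pair and the last column, which touch every cross but are disjoint from all of them. -/
def wallBramble (t : ℕ) : (Fin t × Fin t) ⊕ Bool → Set (wallVerts (2 * t + 2))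
  | .inl (a, b) => wallRowPair _ (a.val + 1) (2 * t + 1) ∪ wallColumn _ (b.val + 1) 1 (2 * t)
  | .inr false => wallRowPair _ (t + 1) (2 * t + 1)
  | .inr true => wallColumn _ (2 * t + 2) 1 (2 * t + 2)

theorem wallVerts_touch_of_mk {r : ℕ} {X Y : Set (wallVerts r)} (i j i' j' : ℕ)
    (h : (i, j) ∈ wallVerts r) (h' : (i', j') ∈ wallVerts r) (hX : ⟨(i, j), h⟩ ∈ X)
    (hY : ⟨(i', j'), h'⟩ ∈ Y) (hij : i = i' ∧ j = j' ∨ (Wall r).Adj ⟨(i, j), h⟩ ⟨(i', j'), h'⟩) :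
    ∃ a ∈ X, ∃ b ∈ Y, a = b ∨ (Wall r).Adj a b := by
  refine ⟨_, hX, _, hY, hij.imp_left ?_⟩
  rintro ⟨rfl, rfl⟩
  rfl

theorem isBramble_wallBramble (t : ℕ) : (Wall (2 * t + 2)).IsBramble (wallBramble t) := by
  refine ⟨?_, ?_⟩
  · rintro (⟨⟨a, ha⟩, ⟨b, hb⟩⟩ | _ | _)
    · show ((Wall _).induce (wallRowPair _ (a + 1) _ ∪ wallColumn _ (b + 1) _ _)).Connected
      exact induce_union_connected
        (connected_wallRowPair (by omega) (by omega) (by omega) (by omega)).preconnected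
        (connected_wallColumn (by omega) (by omega) (by omega) (by omega) (by omega)).preconnected
        ⟨⟨(2 * a + 1, b + 1), mem_wallVerts.mpr (by omega)⟩, mk_mem_wallRowPair.mpr (by omega),
          mk_mem_wallColumn.mpr (by omega)⟩
    · exact connected_wallRowPair (by omega) (by omega) (by omega) (by omega)
    · exact connected_wallColumn (by omega) (by omega) (by omega) (by omega) (by omega)
  · rintro (⟨⟨a, ha⟩, ⟨b, hb⟩⟩ | _ | _) (⟨⟨a', ha'⟩, ⟨b', hb'⟩⟩ | _ | _)
    · refine wallVerts_touch_of_mk (2 * a + 1) (b' + 1) (2 * a + 1) (b' + 1) ?_ ?_ ?_ ?_ ?_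
        <;> simp [wallBramble] <;> omega
    · refine wallVerts_touch_of_mk (2 * t) (b + 1) (2 * t + 1) (b + 1) ?_ ?_ ?_ ?_ ?_
        <;> simp [wallBramble] <;> omega
    · refine wallVerts_touch_of_mk (2 * a + 1) (2 * t + 1) (2 * a + 1) (2 * t + 2) ?_ ?_ ?_ ?_ ?_
        <;> simp [wallBramble] <;> omega
    · refine wallVerts_touch_of_mk (2 * t + 1) (b' + 1) (2 * t) (b' + 1) ?_ ?_ ?_ ?_ ?_
        <;> simp [wallBramble] <;> omega
    · refine wallVerts_touch_of_mk (2 * t + 1) 1 (2 * t + 1) 1 ?_ ?_ ?_ ?_ ?_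
        <;> simp [wallBramble] <;> omega
    · refine wallVerts_touch_of_mk (2 * t + 1) (2 * t + 1) (2 * t + 1) (2 * t + 2) ?_ ?_ ?_ ?_ ?_
        <;> simp [wallBramble] <;> omega
    · refine wallVerts_touch_of_mk (2 * a' + 1) (2 * t + 2) (2 * a' + 1) (2 * t + 1) ?_ ?_ ?_ ?_ ?_
        <;> simp [wallBramble] <;> omega
    · refine wallVerts_touch_of_mk (2 * t + 1) (2 * t + 2) (2 * t + 1) (2 * t + 1) ?_ ?_ ?_ ?_ ?_
        <;> simp [wallBramble] <;> omega
    · refine wallVerts_touch_of_mk 1 (2 * t + 2) 1 (2 * t + 2) ?_ ?_ ?_ ?_ ?_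
        <;> simp [wallBramble]

theorem le_card_of_isHittingSet_wallBramble {t : ℕ} {S : Finset (wallVerts (2 * t + 2))}
    (hS : IsHittingSet (wallBramble t) S) : t + 2 ≤ S.card := by
  classical
  obtain ⟨h₁, h₁S, h₁X⟩ := hS (.inr false)
  obtain ⟨h₂, h₂S, h₂X⟩ := hS (.inr true)
  simp only [wallBramble, wallRowPair, wallColumn, Set.mem_ofPred_eq] at h₁X h₂X
  have hne : h₂ ≠ h₁ := by rintro rfl; omega
  set S' := (S.erase h₁).erase h₂
  have hcard : S'.card + 2 = S.card := by
    have h₂S' : h₂ ∈ S.erase h₁ := mem_erase.mpr ⟨hne, h₂S⟩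
    have := card_pos.mpr ⟨h₂, h₂S'⟩
    rw [card_erase_of_mem h₂S', card_erase_of_mem h₁S] at *
    omega
  by_contra hlt
  -- `S'` meets fewer than `t` row pairs and fewer than `t` columns, so it misses a cross
  obtain ⟨a, ha, haS⟩ := exists_mem_notMem_of_card_lt_card
    (s := S'.image fun u => (u.1.1 + 1) / 2 - 1) (t := range t)
    (by rw [card_range]; exact card_image_le.trans_lt (by omega))
  obtain ⟨b, hb, hbS⟩ := exists_mem_notMem_of_card_lt_card
    (s := S'.image fun u => u.1.2 - 1) (t := range t)
    (by rw [card_range]; exact card_image_le.trans_lt (by omega))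
  rw [mem_range] at ha hb
  obtain ⟨x, hxS, hx⟩ := hS (.inl (⟨a, ha⟩, ⟨b, hb⟩))
  simp only [wallBramble, wallRowPair, wallColumn, Set.mem_union, Set.mem_ofPred_eq] at hx
  have hxS' : x ∈ S' :=
    mem_erase.mpr ⟨by rintro rfl; omega, mem_erase.mpr ⟨by rintro rfl; omega, hxS⟩⟩
  rcases hx with hx | hx
  · exact haS (mem_image.mpr ⟨x, hxS', by omega⟩)
  · exact hbS (mem_image.mpr ⟨x, hxS', by omega⟩)

theorem hasBrambleOfOrderAtLeast_wall (t : ℕ) :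
    (Wall (2 * t + 2)).HasBrambleOfOrderAtLeast (t + 2) :=
  ⟨_, wallBramble t, inferInstance, isBramble_wallBramble t,
    fun _ hS => le_card_of_isHittingSet_wallBramble hS⟩

end Wall

namespace CNF

variable {V : Type} [DecidableEq V] {F : CNF V} {B : Finset V} {τ : V → Bool}

theorem inc_reduce_adj {a b : V ⊕ F.ι} (hab : F.inc.Adj a b) (ha : a ∈ F.surv B τ)
    (hb : b ∈ F.surv B τ) : (F.reduce B τ).inc.Adj a b := by
  rcases a with x | i <;> rcases b with y | j <;> simp_all [CNF.inc, CNF.reduce, CNF.surv] <;>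
    exact Finset.mem_filter.mpr ⟨hab.1, fun ⟨y, s⟩ hl hyB => by cases s <;> simp_all⟩

theorem exists_subset_surv {S : Set (V ⊕ F.ι)} (hSB : ∀ x ∈ B, Sum.inl x ∉ S)
    (hS : ∀ x ∈ B, ∀ c c' : F.ι, Sum.inr c ∈ S → Sum.inr c' ∈ S →
      (x, true) ∈ F.lit c → (x, false) ∉ F.lit c') :
    ∃ τ : V → Bool, S ⊆ F.surv B τ := by
  classical
  refine ⟨fun x => !decide (∃ c, Sum.inr c ∈ S ∧ (x, true) ∈ F.lit c), ?_⟩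
  rintro (x | i) h
  · exact fun hx => hSB x hx h
  · rintro ⟨x, _ | _⟩ hl hx
    · simpa using fun c hc hpos => hS x hx c i hc h hpos hl
    · simpa using ⟨i, h, hl⟩

end CNF

/-- If `B` is a strong `W_{≤t}`-backdoor set of `F` and `W` a subgraph of
`inc(F)` that is a subdivision of the `(2t+2)`-wall with `V(W) ∩ B = ∅`, then some `x ∈ B`
kills `W` externally: `W` contains a clause `c` with `x ∈ lit(c)` and a clause `c'` with
`¬x ∈ lit(c')`. -/
theorem stmt15 {V : Type} [DecidableEq V] (t : ℕ) (F : CNF V) (B : Finset V)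
    (hB : F.strongBackdoor t B) (W : F.inc.Subgraph)
    (hW : IsSubdivisionOf W.coe (Wall (2 * t + 2)))
    (hWB : ∀ b ∈ B, Sum.inl b ∉ W.verts) :
    ∃ x ∈ B, ∃ c c' : F.ι, Sum.inr c ∈ W.verts ∧ Sum.inr c' ∈ W.verts ∧
      (x, true) ∈ F.lit c ∧ (x, false) ∈ F.lit c' := by
  by_contra hclash
  push Not at hclash
  obtain ⟨τ, hτ⟩ := CNF.exists_subset_surv hWB hclash
  let f : W.coe →g (F.reduce B τ).inc :=
    ⟨Subtype.val, fun h => CNF.inc_reduce_adj (W.adj_sub h) (hτ (W.edge_vert h))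
      (hτ (W.edge_vert h.symm))⟩
  have hminor := hW.hasMinor.map f Subtype.val_injective
  have := ((hasBrambleOfOrderAtLeast_wall t).of_hasMinor hminor).le_of_twLE (hB.2 τ)
  omega
end
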